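/- Fix n ≥ 1 and consider in ℝ² the annuli A₁ = A((0,2^{−n}), 2^{−n}, 30) and A₂ = A((0, 2^{−n} − 2^{−5n}), 2^{−n} − 2^{−5n}, 30). Then the diameter of A₁ ∩ A₂ is at least C·2^{−13.5n} for some absolute constant C > 0 independent of n; consequently the exponent 13.5 in the upper bound 24·2^{−13.5n} for diameters of intersections of such thin annuli is optimal. -/

import Mathlib

/-!
The outer circles of the two annuli are internally tangent at the origin `O`, which therefore
lies in both annuli. A point `P` of the inner circle (radius `R - δ`) at abscissa `x` sits at
height `h ≤ x² / (R - δ)` above `O`, and `|P z₁|² = R² - 2δh` for the centre `z₁ = (0, R)` of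
the outer one; so `P` stays in the outer annulus as long as `2δh < 2R·R³⁰ - R⁶⁰`.
For `R = 2⁻ⁿ`, `δ = 2⁻⁵ⁿ` this allows `x = 2^{-13.5n} / 2`, and `diam ≥ |OP| ≥ x`.
-/

open MeasureTheory Metric Set Filter

noncomputable def pt (a b : ℝ) : EuclideanSpace ℝ (Fin 2) :=
  (WithLp.equiv 2 (Fin 2 → ℝ)).symm ![a, b]

/-- The annulus `A(z,r,30) = B(z,r) \ B(z, r - r^30)` in the Euclidean plane. -/
noncomputable def ann30 (z : EuclideanSpace ℝ (Fin 2)) (r : ℝ) :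
    Set (EuclideanSpace ℝ (Fin 2)) :=
  closedBall z r \ closedBall z (r - r ^ (30 : ℕ))

lemma dist_pt (a b c d : ℝ) :
    dist (pt a b) (pt c d) = √((a - c) ^ 2 + (b - d) ^ 2) := by
  rw [EuclideanSpace.dist_eq]
  simp [pt, Fin.sum_univ_two, Real.dist_eq, sq_abs]

lemma mem_ann30 {p z : EuclideanSpace ℝ (Fin 2)} {r : ℝ} :
    p ∈ ann30 z r ↔ dist p z ≤ r ∧ r - r ^ 30 < dist p z := by
  simp only [ann30, Set.mem_sdiff, mem_closedBall, not_le]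

lemma mem_ann30_of_dist_eq {p z : EuclideanSpace ℝ (Fin 2)} {r : ℝ} (hr : 0 < r)
    (h : dist p z = r) : p ∈ ann30 z r := by
  subst h
  exact mem_ann30.2 ⟨le_rfl, sub_lt_self _ (by positivity)⟩

lemma sub_sqrt_sq_sub_sq_mul_le {r x : ℝ} (hr : 0 ≤ r) (hx : x ^ 2 ≤ r ^ 2) :
    (r - √(r ^ 2 - x ^ 2)) * r ≤ x ^ 2 := by
  have hs : √(r ^ 2 - x ^ 2) ^ 2 = r ^ 2 - x ^ 2 := Real.sq_sqrt (by linarith)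
  have hsr : √(r ^ 2 - x ^ 2) ≤ r := (Real.sqrt_le_left hr).2 (by nlinarith)
  nlinarith [Real.sqrt_nonneg (r ^ 2 - x ^ 2)]

lemma le_diam_inter_ann30 {R δ x : ℝ} (hδ : 0 ≤ δ) (hr : 0 < R - δ) (hx : 0 ≤ x)
    (hxr : x ≤ R - δ) (hthin : 2 * δ * x ^ 2 < (R - δ) * (R ^ 30 * (2 * R - R ^ 30))) :
    x ≤ diam (ann30 (pt 0 R) R ∩ ann30 (pt 0 (R - δ)) (R - δ)) := by
  set r := R - δ
  set s := √(r ^ 2 - x ^ 2)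
  have hs : s ^ 2 = r ^ 2 - x ^ 2 := Real.sq_sqrt (by nlinarith)
  have hsr : s ≤ r := (Real.sqrt_le_left hr.le).2 (by nlinarith)
  have hh : (r - s) * r ≤ x ^ 2 := sub_sqrt_sq_sub_sq_mul_le hr.le (by nlinarith)
  have hR : 0 < R := by linarith
  have hPz₁ : dist (pt x (r - s)) (pt 0 R) = √(R ^ 2 - 2 * δ * (r - s)) := by
    rw [dist_pt]; congr 1; linear_combination hs
  have hO : pt 0 0 ∈ ann30 (pt 0 R) R ∩ ann30 (pt 0 r) r := by
    refine ⟨mem_ann30_of_dist_eq hR ?_, mem_ann30_of_dist_eq hr ?_⟩ <;>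
      rw [dist_pt, sub_self, zero_sub, neg_sq, zero_pow two_ne_zero, zero_add, Real.sqrt_sq]
    exacts [hR.le, hr.le]
  have hP : pt x (r - s) ∈ ann30 (pt 0 R) R ∩ ann30 (pt 0 r) r := by
    refine ⟨mem_ann30.2 ⟨?_, ?_⟩, mem_ann30_of_dist_eq hr ?_⟩
    · rw [hPz₁, Real.sqrt_le_left hR.le]
      nlinarith
    · have hgap : 2 * δ * (r - s) < R ^ 30 * (2 * R - R ^ 30) :=
        lt_of_mul_lt_mul_right (by nlinarith) hr.le
      rw [hPz₁]
      exact Real.lt_sqrt_of_sq_lt (by nlinarith)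
    · rw [dist_pt, show (x - 0) ^ 2 + (r - s - r) ^ 2 = r ^ 2 by linear_combination hs,
        Real.sqrt_sq hr.le]
  have hbdd : Bornology.IsBounded (ann30 (pt 0 R) R ∩ ann30 (pt 0 r) r) :=
    isBounded_closedBall.subset fun _ hp => hp.1.1
  calc x ≤ dist (pt 0 0) (pt x (r - s)) := by
        rw [dist_pt, Real.le_sqrt hx (by positivity)]
        nlinarith
    _ ≤ _ := dist_le_diam_of_mem hbdd hO hP

lemma le_diam_inter_ann30_pow {u : ℝ} (hu : 0 < u) (hu2 : u ^ 2 ≤ 1 / 2) :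
    u ^ 27 / 2 ≤
      diam (ann30 (pt 0 (u ^ 2)) (u ^ 2) ∩ ann30 (pt 0 (u ^ 2 - u ^ 10)) (u ^ 2 - u ^ 10)) := by
  set a := u ^ 2
  have ha : 0 < a := by positivity
  have ha4 : a ^ 4 < 1 / 2 := by nlinarith [pow_le_pow_left₀ ha.le hu2 4]
  have hr : a / 2 < a - u ^ 10 := by
    rw [show u ^ 10 = a ^ 5 by ring]; nlinarith
  have ha30 : a ^ 30 < a := pow_lt_self_of_lt_one₀ ha (by linarith) (by norm_num)
  have hx : u ^ 27 / 2 ≤ a / 2 := by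
    have : u ^ 27 ≤ u ^ 2 := pow_le_pow_of_le_one hu.le (by nlinarith) (by norm_num)
    linarith
  refine le_diam_inter_ann30 (by positivity) (by linarith) (by positivity) (by linarith) ?_
  calc 2 * u ^ 10 * (u ^ 27 / 2) ^ 2 = a / 2 * (a ^ 30 * a) := by ring
    _ < (a - u ^ 10) * (a ^ 30 * (2 * a - a ^ 30)) := by
      gcongr
      linarith

/-- Optimality of the exponent `13.5`: the intersection of the two annuli
`A((0,2^{-n}),2^{-n},30)` and `A((0,2^{-n}-2^{-5n}),2^{-n}-2^{-5n},30)` has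
diameter at least `C · 2^{-13.5 n}` for an absolute constant `C > 0`. -/
theorem stmt8 :
    ∃ C > (0 : ℝ), ∀ n : ℕ, 1 ≤ n →
      C * (2 : ℝ) ^ (-(13.5 : ℝ) * (n : ℝ)) ≤
        Metric.diam
          (ann30 (pt 0 ((2 : ℝ) ^ (-(n : ℝ)))) ((2 : ℝ) ^ (-(n : ℝ))) ∩
           ann30 (pt 0 ((2 : ℝ) ^ (-(n : ℝ)) - (2 : ℝ) ^ (-5 * (n : ℝ))))
             ((2 : ℝ) ^ (-(n : ℝ)) - (2 : ℝ) ^ (-5 * (n : ℝ)))) := by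
  refine ⟨1 / 2, by norm_num, fun n hn => ?_⟩
  set u : ℝ := 2 ^ (-(n : ℝ) / 2)
  have hpow (k : ℕ) : (2 : ℝ) ^ (-(n : ℝ) / 2 * k) = u ^ k := by
    rw [Real.rpow_mul zero_le_two, Real.rpow_natCast]
  have h2 : (2 : ℝ) ^ (-(n : ℝ)) = u ^ 2 := by rw [← hpow]; push_cast; ring_nf
  have h10 : (2 : ℝ) ^ (-5 * (n : ℝ)) = u ^ 10 := by rw [← hpow]; push_cast; ring_nf
  have h27 : (2 : ℝ) ^ (-(13.5 : ℝ) * (n : ℝ)) = u ^ 27 := by rw [← hpow]; push_cast; ring_nf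
  have hu2 : u ^ 2 ≤ 1 / 2 := by
    rw [← h2, one_div, ← Real.rpow_neg_one]
    exact Real.rpow_le_rpow_of_exponent_le one_le_two (by simpa using hn)
  rw [h2, h10, h27, one_div_mul_eq_div]
  exact le_diam_inter_ann30_pow (by positivity) hu2
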